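/- arXiv:0809.0641 — 4 statements merged into one kernel-verified Lean document; each statement's English description precedes it below -/
import Mathlib

section
/- (Popoviciu's inequality) For positive weights w_1,...,w_n and positive reals a_1,...,a_n with n ≥ 2, with A_k, G_k the weighted arithmetic and geometric means of the first k terms and W_k the partial weight sums, one has (A_n/G_n)^{W_n} ≥ (A_{n-1}/G_{n-1})^{W_{n-1}}. -/
theorem popoviciu_inequality (n : ℕ) (hn : 2 ≤ n) (a w : Fin n → ℝ)
    (ha : ∀ i, 0 < a i) (hw : ∀ i, 0 < w i) :
    ((∑ i, w i * a i) / (∑ i, w i) / (∏ i, a i ^ w i) ^ ((∑ i, w i)⁻¹)) ^ (∑ i, w i) ≥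
      ((∑ i : Fin n, if (i : ℕ) < n - 1 then w i * a i else 0) /
            (∑ i : Fin n, if (i : ℕ) < n - 1 then w i else 0) /
          (∏ i : Fin n, if (i : ℕ) < n - 1 then a i ^ w i else 1) ^
            ((∑ i : Fin n, if (i : ℕ) < n - 1 then w i else 0)⁻¹)) ^
        (∑ i : Fin n, if (i : ℕ) < n - 1 then w i else 0) := by
  obtain ⟨m, rfl⟩ : ∃ m, n = m + 1 := ⟨n - 1, by omega⟩
  haveI : NeZero m := ⟨by omega⟩
  have hsum : ∀ f : Fin (m+1) → ℝ,
      (∑ i : Fin (m+1), if (i:ℕ) < m + 1 - 1 then f i else 0) = ∑ i : Fin m, f i.castSucc := by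
    intro f
    rw [Fin.sum_univ_castSucc]
    simp [Fin.is_lt]
  have hprod : (∏ i : Fin (m+1), if (i:ℕ) < m + 1 - 1 then a i ^ w i else 1)
      = ∏ i : Fin m, a i.castSucc ^ w i.castSucc := by
    rw [Fin.prod_univ_castSucc]
    simp [Fin.is_lt]
  rw [hsum, hsum, hprod, Fin.sum_univ_castSucc (f := fun i => w i * a i),
    Fin.sum_univ_castSucc (f := w), Fin.prod_univ_castSucc (f := fun i => a i ^ w i)]
  set T := ∑ i : Fin m, w i.castSucc with hTdef
  set Ta := ∑ i : Fin m, w i.castSucc * a i.castSucc with hTadef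
  set Q := ∏ i : Fin m, a i.castSucc ^ w i.castSucc with hQdef
  set aN := a (Fin.last m)
  set wN := w (Fin.last m)
  have hT : 0 < T := Finset.sum_pos (fun i _ => hw _) Finset.univ_nonempty
  have hTa : 0 < Ta := Finset.sum_pos (fun i _ => mul_pos (hw _) (ha _)) Finset.univ_nonempty
  have hQ : 0 < Q := Finset.prod_pos fun i _ => Real.rpow_pos_of_pos (ha _) _
  have haN : 0 < aN := ha _
  have hwN : 0 < wN := hw _
  have hS : 0 < T + wN := by linarith
  have hSa : 0 < Ta + wN * aN := by positivity
  -- simplify both sides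
  have expand : ∀ x s p : ℝ, 0 < x → 0 < s → 0 < p →
      (x / s / p ^ s⁻¹) ^ s = (x / s) ^ s / p := by
    intro x s p hx hs hp
    rw [Real.div_rpow (by positivity) (by positivity), Real.rpow_inv_rpow hp.le hs.ne']
  rw [expand _ _ _ hSa hS (by positivity), expand _ _ _ hTa hT hQ]
  rw [ge_iff_le, div_le_div_iff₀ hQ (by positivity)]
  have key : (Ta / T) ^ (T / (T + wN)) * aN ^ (wN / (T + wN)) ≤ (Ta + wN * aN) / (T + wN) := by
    have h := Real.geom_mean_le_arith_mean2_weighted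
      (div_nonneg hT.le hS.le) (div_nonneg hwN.le hS.le)
      (div_nonneg hTa.le hT.le) haN.le (by field_simp)
    calc (Ta / T) ^ (T / (T + wN)) * aN ^ (wN / (T + wN))
        ≤ T / (T + wN) * (Ta / T) + wN / (T + wN) * aN := h
      _ = (Ta + wN * aN) / (T + wN) := by field_simp
  have h2 := Real.rpow_le_rpow (by positivity) key hS.le
  calc (Ta / T) ^ T * (Q * aN ^ wN)
      = ((Ta / T) ^ (T / (T + wN)) * aN ^ (wN / (T + wN))) ^ (T + wN) * Q := by
        rw [Real.mul_rpow (by positivity) (by positivity),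
          ← Real.rpow_mul (by positivity), ← Real.rpow_mul haN.le,
          div_mul_cancel₀ _ hS.ne', div_mul_cancel₀ _ hS.ne']
        ring
    _ ≤ ((Ta + wN * aN) / (T + wN)) ^ (T + wN) * Q :=
        mul_le_mul_of_nonneg_right h2 hQ.le
end

section
/- (Pečarić's generalized Bernoulli inequality) If a_1,...,a_n > -1 are reals, w_1,...,w_n ≥ 0 are reals with ∑ w_i ≤ 1, then ∏_{i=1}^n (1+a_i)^{w_i} ≤ 1 + ∑_{i=1}^n w_i a_i. -/
theorem pecaric_bernoulli (n : ℕ) (hn : 1 ≤ n) (a w : Fin n → ℝ)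
    (ha : ∀ i, -1 < a i) (hw : ∀ i, 0 ≤ w i) (hW : ∑ i, w i ≤ 1) :
    ∏ i, (1 + a i) ^ w i ≤ 1 + ∑ i, w i * a i := by
  set W : Fin (n + 1) → ℝ := Fin.cons (1 - ∑ i, w i) w with hWdef
  set Z : Fin (n + 1) → ℝ := Fin.cons 1 (fun i => 1 + a i) with hZdef
  have key := Real.geom_mean_le_arith_mean_weighted Finset.univ W Z
    (fun i _ => by
      induction i using Fin.cases with
      | zero => simpa [hWdef] using hW
      | succ j => simpa [hWdef] using hw j)
    (by simp [hWdef, Fin.sum_univ_succ])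
    (fun i _ => by
      induction i using Fin.cases with
      | zero => simp [hZdef]
      | succ j => have := ha j; simp [hZdef]; linarith)
  rw [Fin.prod_univ_succ, Fin.sum_univ_succ] at key
  simp only [hWdef, hZdef, Fin.cons_zero, Fin.cons_succ] at key
  calc ∏ i, (1 + a i) ^ w i
      = 1 ^ (1 - ∑ i, w i) * ∏ i, (1 + a i) ^ w i := by rw [Real.one_rpow, one_mul]
    _ ≤ (1 - ∑ i, w i) * 1 + ∑ i, w i * (1 + a i) := key
    _ = 1 + ∑ i, w i * a i := by
        rw [Finset.sum_congr rfl (fun i _ => mul_add (w i) 1 (a i)), Finset.sum_add_distrib]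
        ring
end

section
/- For x ≥ -1, y ≥ -1, α ≥ 0, β ≥ 0 with α + β ≤ 1, one has (1+x)^α * (1+y)^β ≤ 1 + α*x + β*y. -/
theorem two_term_bernoulli (x y α β : ℝ) (hx : -1 ≤ x) (hy : -1 ≤ y)
    (hα : 0 ≤ α) (hβ : 0 ≤ β) (hαβ : α + β ≤ 1) :
    (1 + x) ^ α * (1 + y) ^ β ≤ 1 + α * x + β * y := by
  have h := Real.geom_mean_le_arith_mean3_weighted hα hβ (by linarith : (0:ℝ) ≤ 1 - α - β)
    (by linarith : (0:ℝ) ≤ 1 + x) (by linarith : (0:ℝ) ≤ 1 + y) zero_le_one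
    (by ring : α + β + (1 - α - β) = 1)
  rw [Real.one_rpow] at h
  nlinarith [h]
end

section
/- For fixed a > 0, the function g(x) = (1 + a/x)^{x+a} is strictly decreasing on (0, ∞), and g(x) > e^a for all x > 0. -/
/-! With `f x = (x + a) * log (1 + a / x)` we have `g = exp ∘ f`. Both the sign of
`f' x = log (1 + a / x) - a / x` and the bound `a < f x` are the strict inequalities
`1 - y⁻¹ < log y < y - 1` at `y = 1 + a / x`. -/

open Real Set

theorem Real.one_sub_inv_lt_log_of_pos {x : ℝ} (hx : 0 < x) (hx1 : x ≠ 1) : 1 - x⁻¹ < log x := by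
  have := log_lt_sub_one_of_pos (inv_pos.2 hx) (inv_ne_one.2 hx1)
  rw [log_inv] at this
  linarith

theorem hasDerivAt_add_mul_log_one_add_div {a x : ℝ} (hx : x ≠ 0) (hxa : x + a ≠ 0) :
    HasDerivAt (fun y ↦ (y + a) * log (1 + a / y)) (log (1 + a / x) - a / x) x := by
  have hbase : 1 + a / x ≠ 0 := by
    rw [one_add_div hx]
    exact div_ne_zero hxa hx
  have hlog : HasDerivAt (fun y ↦ log (1 + a / y)) (a * -(x ^ 2)⁻¹ / (1 + a / x)) x :=
    (((hasDerivAt_inv hx).const_mul a).const_add 1).log hbase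
  refine (((hasDerivAt_id' x).add_const a).fun_mul hlog).congr_deriv ?_
  rw [one_add_div hx]
  field_simp
  ring

theorem log_one_add_div_lt_div {a x : ℝ} (ha : 0 < a) (hx : 0 < x) : log (1 + a / x) < a / x := by
  have := log_lt_sub_one_of_pos (by positivity : 0 < 1 + a / x) (by simp [ha.ne', hx.ne'])
  linarith

theorem strictAntiOn_add_mul_log_one_add_div {a : ℝ} (ha : 0 < a) :
    StrictAntiOn (fun x ↦ (x + a) * log (1 + a / x)) (Ioi 0) := by
  have hderiv : ∀ x ∈ Ioi (0 : ℝ),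
      HasDerivAt (fun y ↦ (y + a) * log (1 + a / y)) (log (1 + a / x) - a / x) x :=
    fun x (hx : 0 < x) ↦ hasDerivAt_add_mul_log_one_add_div hx.ne' (by positivity)
  refine strictAntiOn_of_deriv_neg (convex_Ioi 0)
    (fun x hx ↦ (hderiv x hx).continuousAt.continuousWithinAt) fun x hx ↦ ?_
  rw [interior_Ioi] at hx
  rw [(hderiv x hx).deriv]
  linarith [log_one_add_div_lt_div ha hx]

theorem lt_add_mul_log_one_add_div {a x : ℝ} (ha : 0 < a) (hx : 0 < x) :
    a < (x + a) * log (1 + a / x) := by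
  have hlog :=
    one_sub_inv_lt_log_of_pos (by positivity : 0 < 1 + a / x) (by simp [ha.ne', hx.ne'])
  have hlhs : 1 - (1 + a / x)⁻¹ = a / (x + a) := by field_simp; ring
  rwa [hlhs, div_lt_iff₀' (by positivity)] at hlog

theorem exp_approx_anti (a : ℝ) (ha : 0 < a) :
    StrictAntiOn (fun x : ℝ => (1 + a / x) ^ (x + a)) (Set.Ioi 0) ∧
      ∀ x : ℝ, 0 < x → Real.exp a < (1 + a / x) ^ (x + a) := by
  have hexp : ∀ x : ℝ, 0 < x → (1 + a / x) ^ (x + a) = exp ((x + a) * log (1 + a / x)) :=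
    fun x hx ↦ by rw [rpow_def_of_pos (by positivity), mul_comm]
  refine ⟨fun x hx y hy hxy ↦ ?_, fun x hx ↦ ?_⟩
  · simp only [hexp x hx, hexp y hy]
    exact exp_lt_exp.2 (strictAntiOn_add_mul_log_one_add_div ha hx hy hxy)
  · rw [hexp x hx]
    exact exp_lt_exp.2 (lt_add_mul_log_one_add_div ha hx)
end
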